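/- arXiv:1608.05550 — 2 statements merged into one kernel-verified Lean document; each statement's English description precedes it below -/
import Mathlib

section
/- No two distinct MUPSs of a string S begin at the same position, and no two distinct MUPSs end at the same position; consequently, a string of length n has at most n MUPSs. -/
/-- `sub S i j` is the substring `S[i..j]`, 1-indexed and inclusive. -/
def sub (S : List Char) (i j : ℕ) : List Char := (S.drop (i-1)).take (j+1-i)

/-- A string is a palindrome if it equals its reversal. -/
def isPal (w : List Char) : Prop := w.reverse = w

/-- The set of (1-indexed) occurrence positions of `w` in `S`. -/
def occs (S w : List Char) : Finset ℕ :=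
  (Finset.Icc 1 S.length).filter (fun p => sub S p (p + w.length - 1) = w)

/-- `w` occurs exactly once in `S`. -/
def uniqueIn (S w : List Char) : Prop := (occs S w).card = 1

/-- `[i,j]` is (the interval of) a unique palindromic substring of `S`. -/
def UPS (S : List Char) (i j : ℕ) : Prop :=
  1 ≤ i ∧ i ≤ j ∧ j ≤ S.length ∧ isPal (sub S i j) ∧ uniqueIn S (sub S i j)

/-- `[i,j]` is a minimal unique palindromic substring of `S`. -/
def MUPS (S : List Char) (i j : ℕ) : Prop :=
  UPS S i j ∧ (j + 1 - i ≤ 2 ∨ 2 ≤ (occs S (sub S (i+1) (j-1))).card)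

/-- `[i,j]` is a shortest unique palindromic substring of `S` for the query `[s,t]`. -/
def SUPS (S : List Char) (s t i j : ℕ) : Prop :=
  UPS S i j ∧ i ≤ s ∧ s ≤ t ∧ t ≤ j ∧
    ∀ i' j', UPS S i' j' → i' ≤ s → t ≤ j' → j - i ≤ j' - i'


/-!
A palindromic prefix `u` of a palindrome `w` is mirrored onto a suffix of `w`, so it occurs
a second time unless `u = w`; symmetrically for palindromic suffixes. Hence two distinct unique
palindromic substrings never share a start or an end position, and the start positions of the
MUPSs are distinct elements of `[1, n]`.
-/

namespace isPal

variable {w : List Char} {k : ℕ}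

theorem drop_eq_take (hw : isPal w) (hk : isPal (w.take k)) :
    w.drop (w.length - k) = w.take k := by
  rw [← hk, ← List.reverse_reverse (w.drop _), ← List.take_reverse, hw]

theorem take_eq_drop (hw : isPal w) (hk : isPal (w.drop k)) :
    w.take (w.length - k) = w.drop k := by
  rw [← hk, ← List.reverse_reverse (w.take _), ← List.drop_reverse, hw]

end isPal

section Substrings

variable {S w : List Char} {i j k p q : ℕ}

theorem length_sub (hi : 1 ≤ i) (hj : j ≤ S.length) : (sub S i j).length = j + 1 - i := by
  simp only [sub, List.length_take, List.length_drop]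
  omega

theorem sub_eq_take_sub (hk : k ≤ j) : sub S i k = (sub S i j).take (k + 1 - i) := by
  simp only [sub, List.take_take]
  congr 1
  omega

theorem sub_eq_drop_sub (hi : 1 ≤ i) (hk : i ≤ k) : sub S k j = (sub S i j).drop (k - i) := by
  simp only [sub, List.drop_take, List.drop_drop]
  rw [show i - 1 + (k - i) = k - 1 by omega, show j + 1 - i - (k - i) = j + 1 - k by omega]

theorem mem_occs_of_sub_eq (hp : 1 ≤ p) (hpq : p ≤ q) (hq : q ≤ S.length) (h : sub S p q = w) :
    p ∈ occs S w := by
  subst h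
  simp only [occs, Finset.mem_filter, Finset.mem_Icc, length_sub hp hq]
  exact ⟨⟨hp, by omega⟩, by rw [show p + (q + 1 - p) - 1 = q by omega]⟩

theorem uniqueIn.eq_of_mem_occs (hw : uniqueIn S w) (hp : p ∈ occs S w) (hq : q ∈ occs S w) :
    p = q := by
  obtain ⟨a, ha⟩ := Finset.card_eq_one.mp hw
  rw [ha, Finset.mem_singleton] at hp hq
  rw [hp, hq]

end Substrings

namespace UPS

variable {S : List Char}

theorem right_unique {i j₁ j₂ : ℕ} (h₁ : UPS S i j₁) (h₂ : UPS S i j₂) : j₁ = j₂ := by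
  wlog hj : j₁ ≤ j₂ generalizing j₁ j₂
  · exact (this h₂ h₁ (by omega)).symm
  obtain ⟨hi, hij₁, -, hpal₁, huniq₁⟩ := h₁
  obtain ⟨-, -, hj₂, hpal₂, -⟩ := h₂
  have hmirror : sub S (i + (j₂ - j₁)) j₂ = sub S i j₁ := by
    have := hpal₂.drop_eq_take (k := j₁ + 1 - i) (by rwa [← sub_eq_take_sub hj])
    rwa [← sub_eq_take_sub hj, length_sub hi hj₂,
      show j₂ + 1 - i - (j₁ + 1 - i) = i + (j₂ - j₁) - i by omega,
      ← sub_eq_drop_sub hi (by omega)] at this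
  have := huniq₁.eq_of_mem_occs (mem_occs_of_sub_eq hi hij₁ (by omega) rfl)
    (mem_occs_of_sub_eq (by omega) (by omega) hj₂ hmirror)
  omega

theorem left_unique {i₁ i₂ j : ℕ} (h₁ : UPS S i₁ j) (h₂ : UPS S i₂ j) : i₁ = i₂ := by
  wlog hi : i₁ ≤ i₂ generalizing i₁ i₂
  · exact (this h₂ h₁ (by omega)).symm
  obtain ⟨hi₁, -, hj, hpal₁, -⟩ := h₁
  obtain ⟨-, hij₂, -, hpal₂, huniq₂⟩ := h₂
  have hmirror : sub S i₁ (j - (i₂ - i₁)) = sub S i₂ j := by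
    have := hpal₁.take_eq_drop (k := i₂ - i₁) (by rwa [← sub_eq_drop_sub hi₁ hi])
    rwa [length_sub hi₁ hj, ← sub_eq_drop_sub hi₁ hi,
      show j + 1 - i₁ - (i₂ - i₁) = j - (i₂ - i₁) + 1 - i₁ by omega,
      ← sub_eq_take_sub (by omega)] at this
  exact huniq₂.eq_of_mem_occs (mem_occs_of_sub_eq hi₁ (by omega) (by omega) hmirror)
    (mem_occs_of_sub_eq (by omega) hij₂ hj rfl)

end UPS

theorem stmt4 (S : List Char) :
    (∀ i1 j1 i2 j2, MUPS S i1 j1 → MUPS S i2 j2 → (i1, j1) ≠ (i2, j2) →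
      i1 ≠ i2 ∧ j1 ≠ j2) ∧
    {p : ℕ × ℕ | MUPS S p.1 p.2}.ncard ≤ S.length := by
  refine ⟨?_, ?_⟩
  · rintro i1 j1 i2 j2 ⟨h₁, -⟩ ⟨h₂, -⟩ hne
    refine ⟨fun hi => hne ?_, fun hj => hne ?_⟩
    · subst hi; rw [h₁.right_unique h₂]
    · subst hj; rw [h₁.left_unique h₂]
  have hstart : ∀ p ∈ {p : ℕ × ℕ | MUPS S p.1 p.2}, p.1 ∈ Set.Icc 1 S.length :=
    fun _ ⟨⟨hi, hij, hj, _⟩, _⟩ => ⟨hi, hij.trans hj⟩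
  have hinj : Set.InjOn Prod.fst {p : ℕ × ℕ | MUPS S p.1 p.2} := by
    rintro ⟨i, j₁⟩ ⟨h₁, -⟩ ⟨_, j₂⟩ ⟨h₂, -⟩ (rfl : i = _)
    exact congrArg _ (h₁.right_unique h₂)
  calc {p : ℕ × ℕ | MUPS S p.1 p.2}.ncard
      ≤ (Set.Icc 1 S.length).ncard :=
        Set.ncard_le_ncard_of_injOn Prod.fst hstart hinj (Set.finite_Icc _ _)
    _ = S.length := by rw [Set.ncard_Icc_nat]; omega
end

section
/- Suppose [x,y] is the only MUPS of S contained in the query interval [s,t], and let z = max(x-s, t-y). If S[x-z..y+z] is a palindrome, then [x-z, y+z] is the unique SUPS for [s,t]; otherwise, no SUPS for [s,t] exists. -/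
/-!
If a unique palindrome `S[x..y]` sits inside a palindrome `S[i..j]`, then its mirror image in
`S[i..j]` is another occurrence of it, so by uniqueness it is its own mirror image: `[x,y]` and
`[i,j]` share their center. Hence every unique palindrome containing `[s,t] ⊇ [x,y]` is
`[x-k, y+k]` for some `k ≥ z`, the shortest candidate is `k = z`, and `[x-z, y+z]` is unique
as soon as it is a palindrome because it contains the unique `[x,y]`.
-/

theorem List.reverse_take_drop_of_reverse_eq {α : Type*} {l : List α} (hl : l.reverse = l)
    {d m : ℕ} (h : d + m ≤ l.length) :
    ((l.drop d).take m).reverse = (l.drop (l.length - d - m)).take m := by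
  rw [List.reverse_take, List.reverse_drop, hl, List.length_drop, List.drop_take]
  congr 1
  omega

theorem sub_length (S : List Char) {a b : ℕ} (ha : 1 ≤ a) (hb : b ≤ S.length) :
    (sub S a b).length = b + 1 - a := by
  simp only [sub, List.length_take, List.length_drop]
  omega

theorem sub_eq_drop_take_sub (S : List Char) {i j a b : ℕ} (hi : 1 ≤ i) (hia : i ≤ a)
    (hbj : b ≤ j) : sub S a b = ((sub S i j).drop (a - i)).take (b + 1 - a) := by
  simp only [sub, List.drop_take, List.drop_drop, List.take_take]
  congr 2 <;> omega

theorem mem_occs_sub_iff (S : List Char) {a b p : ℕ} (ha : 1 ≤ a) (hab : a ≤ b)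
    (hb : b ≤ S.length) :
    p ∈ occs S (sub S a b) ↔
      1 ≤ p ∧ p + (b - a) ≤ S.length ∧ sub S p (p + (b - a)) = sub S a b := by
  have hlen : p + (sub S a b).length - 1 = p + (b - a) := by
    rw [sub_length S ha hb]; omega
  simp only [occs, Finset.mem_filter, Finset.mem_Icc, hlen]
  constructor
  · rintro ⟨⟨hp, -⟩, heq⟩
    have h := congrArg List.length heq
    simp only [sub, List.length_take, List.length_drop] at h
    exact ⟨hp, by omega, heq⟩
  · rintro ⟨hp, hpb, heq⟩
    exact ⟨⟨hp, by omega⟩, heq⟩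

theorem mem_occs_sub_self (S : List Char) {a b : ℕ} (ha : 1 ≤ a) (hab : a ≤ b)
    (hb : b ≤ S.length) : a ∈ occs S (sub S a b) :=
  (mem_occs_sub_iff S ha hab hb).2 ⟨ha, by omega, by rw [Nat.add_sub_cancel' hab]⟩

theorem add_mem_occs_sub_of_mem_occs_sub (S : List Char) {i j a b p : ℕ} (hi : 1 ≤ i)
    (hia : i ≤ a) (hab : a ≤ b) (hbj : b ≤ j) (hj : j ≤ S.length)
    (hp : p ∈ occs S (sub S i j)) : p + (a - i) ∈ occs S (sub S a b) := by
  obtain ⟨hp1, hpj, hpeq⟩ := (mem_occs_sub_iff S hi (by omega) hj).1 hp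
  refine (mem_occs_sub_iff S (by omega) hab (by omega)).2 ⟨by omega, by omega, ?_⟩
  rw [sub_eq_drop_take_sub S hp1 (le_add_right le_rfl)
      (show p + (a - i) + (b - a) ≤ p + (j - i) by omega), hpeq, sub_eq_drop_take_sub S hi hia hbj,
    show p + (a - i) - p = a - i by omega,
    show p + (a - i) + (b - a) + 1 - (p + (a - i)) = b + 1 - a by omega]

theorem uniqueIn_sub_of_le (S : List Char) {i j x y : ℕ} (hi : 1 ≤ i) (hix : i ≤ x)
    (hxy : x ≤ y) (hyj : y ≤ j) (hj : j ≤ S.length) (hu : uniqueIn S (sub S x y)) :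
    uniqueIn S (sub S i j) := by
  have hle : (occs S (sub S i j)).card ≤ (occs S (sub S x y)).card :=
    Finset.card_le_card_of_injOn (· + (x - i))
      (fun _ hp => add_mem_occs_sub_of_mem_occs_sub S hi hix hxy hyj hj hp)
      (fun _ _ _ _ h => by simpa using h)
  have hpos : 0 < (occs S (sub S i j)).card :=
    Finset.card_pos.2 ⟨i, mem_occs_sub_self S hi (by omega) hj⟩
  unfold uniqueIn at *
  omega

theorem sub_reverse_of_isPal (S : List Char) {i j a b : ℕ} (hi : 1 ≤ i) (hia : i ≤ a)
    (hab : a ≤ b) (hbj : b ≤ j) (hj : j ≤ S.length) (hP : isPal (sub S i j)) :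
    (sub S a b).reverse = sub S (i + j - b) (i + j - a) := by
  have hlen := sub_length S hi hj
  rw [sub_eq_drop_take_sub S hi hia hbj, List.reverse_take_drop_of_reverse_eq hP (by omega),
    hlen, sub_eq_drop_take_sub S (j := j) (a := i + j - b) (b := i + j - a) hi
      (by omega) (by omega), show j + 1 - i - (a - i) - (b + 1 - a) = i + j - b - i by omega,
    show i + j - a + 1 - (i + j - b) = b + 1 - a by omega]

theorem isPal_sub_of_isPal (S : List Char) {i j a b : ℕ} (hi : 1 ≤ i) (hia : i ≤ a)
    (hab : a ≤ b) (hbj : b ≤ j) (hj : j ≤ S.length) (hP : isPal (sub S i j))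
    (hcenter : a - i = j - b) : isPal (sub S a b) := by
  unfold isPal
  rw [sub_reverse_of_isPal S hi hia hab hbj hj hP]
  congr 1 <;> omega

theorem sub_center_eq_of_uniqueIn (S : List Char) {i j x y : ℕ} (hi : 1 ≤ i) (hix : i ≤ x)
    (hxy : x ≤ y) (hyj : y ≤ j) (hj : j ≤ S.length) (hP : isPal (sub S i j))
    (hp : isPal (sub S x y)) (hu : uniqueIn S (sub S x y)) : x - i = j - y := by
  have hmirror : sub S (i + j - y) (i + j - y + (y - x)) = sub S x y := by
    rw [show i + j - y + (y - x) = i + j - x by omega,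
      ← sub_reverse_of_isPal S hi hix hxy hyj hj hP]
    exact hp
  have hocc : i + j - y ∈ occs S (sub S x y) :=
    (mem_occs_sub_iff S (by omega) hxy (by omega)).2 ⟨by omega, by omega, hmirror⟩
  have := Finset.card_le_one.1 hu.le _ hocc _ (mem_occs_sub_self S (by omega) hxy (by omega))
  omega

namespace UPS

variable {S : List Char} {i j x y : ℕ}

theorem center_eq (hij : UPS S i j) (hxy : UPS S x y) (hix : i ≤ x) (hyj : y ≤ j) :
    x - i = j - y :=
  sub_center_eq_of_uniqueIn S hij.1 hix hxy.2.1 hyj hij.2.2.1 hij.2.2.2.1 hxy.2.2.2.1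
    hxy.2.2.2.2

theorem of_isPal_of_le (hxy : UPS S x y) (hi : 1 ≤ i) (hix : i ≤ x) (hyj : y ≤ j)
    (hj : j ≤ S.length) (hP : isPal (sub S i j)) : UPS S i j :=
  ⟨hi, by have := hxy.2.1; omega, hj, hP,
    uniqueIn_sub_of_le S hi hix hxy.2.1 hyj hj hxy.2.2.2.2⟩

end UPS

theorem stmt8_general (S : List Char) (s t x y : ℕ) (hst : s ≤ t)
    (hm : MUPS S x y) (hc : s ≤ x ∧ y ≤ t) :
    ∀ i j, SUPS S s t i j ↔
      (1 ≤ x - max (x - s) (t - y) ∧ y + max (x - s) (t - y) ≤ S.length ∧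
       isPal (sub S (x - max (x - s) (t - y)) (y + max (x - s) (t - y))) ∧
       i = x - max (x - s) (t - y) ∧ j = y + max (x - s) (t - y)) := by
  obtain ⟨hxy, -⟩ := hm
  obtain ⟨hsx, hyt⟩ := hc
  intro i j
  set z := max (x - s) (t - y)
  have hz : x - s ≤ z ∧ t - y ≤ z ∧ (z = x - s ∨ z = t - y) :=
    ⟨le_max_left _ _, le_max_right _ _, max_choice _ _⟩
  constructor
  · rintro ⟨hij, his, -, htj, hshortest⟩
    have hcenter := hij.center_eq hxy (his.trans hsx) (hyt.trans htj)
    obtain ⟨hi, -, hj, hP, -⟩ := hij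
    have hP' : isPal (sub S (x - z) (y + z)) :=
      isPal_sub_of_isPal S hi (by omega) (by omega) (by omega) hj hP (by omega)
    have hle := hshortest (x - z) (y + z)
      (hxy.of_isPal_of_le (by omega) (by omega) (by omega) (by omega) hP') (by omega) (by omega)
    exact ⟨by omega, by omega, hP', by omega, by omega⟩
  · rintro ⟨hi, hj, hP, rfl, rfl⟩
    refine ⟨hxy.of_isPal_of_le hi (by omega) (by omega) hj hP, by omega, hst, by omega, ?_⟩
    intro i' j' hij' hi's htj'
    have := hij'.center_eq hxy (hi's.trans hsx) (hyt.trans htj')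
    omega

theorem stmt8 (S : List Char) (s t x y : ℕ) (hst : s ≤ t)
    (hm : MUPS S x y) (hc : s ≤ x ∧ y ≤ t)
    (honly : ∀ x' y', MUPS S x' y' → s ≤ x' → y' ≤ t → x' = x ∧ y' = y) :
    ∀ i j, SUPS S s t i j ↔
      (1 ≤ x - max (x - s) (t - y) ∧ y + max (x - s) (t - y) ≤ S.length ∧
       isPal (sub S (x - max (x - s) (t - y)) (y + max (x - s) (t - y))) ∧
       i = x - max (x - s) (t - y) ∧ j = y + max (x - s) (t - y)) :=
  stmt8_general S s t x y hst hm hc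
end
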